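/- Let X ~ N(θ,1), λ > 0, and s_λ(x) = sgn(x)(|x| - λ)⁺. Then E_θ(s_λ(X) - θ)² ≤ min{ θ² + (4/λ³) φ(λ), λ² + 1 }, where φ is the standard normal density. -/

import Mathlib

open MeasureTheory Real

noncomputable def gaussPDF (x : ℝ) : ℝ := (Real.sqrt (2 * Real.pi))⁻¹ * Real.exp (-x ^ 2 / 2)

noncomputable def softThresh (lam x : ℝ) : ℝ := Real.sign x * max (|x| - lam) 0

lemma gaussPDF_nonneg (x : ℝ) : 0 ≤ gaussPDF x := by
  unfold gaussPDF; positivity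

lemma gaussPDF_even (x : ℝ) : gaussPDF (-x) = gaussPDF x := by
  unfold gaussPDF; rw [neg_pow]; norm_num

lemma continuous_gaussPDF : Continuous gaussPDF := by
  unfold gaussPDF; fun_prop

lemma gaussPDF_eq (x : ℝ) :
    gaussPDF x = (Real.sqrt (2 * Real.pi))⁻¹ * Real.exp (-(1/2 : ℝ) * x ^ 2) := by
  unfold gaussPDF; ring_nf

lemma integrable_gaussPDF : Integrable gaussPDF := by
  have h := (integrable_exp_neg_mul_sq (by norm_num : (0:ℝ) < 1/2)).const_mul
    (Real.sqrt (2 * Real.pi))⁻¹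
  exact h.congr (Filter.Eventually.of_forall fun x => (gaussPDF_eq x).symm)

lemma sqrt_two_pi_pos : 0 < Real.sqrt (2 * Real.pi) := by positivity

lemma integral_gaussPDF : ∫ x, gaussPDF x = 1 := by
  simp_rw [gaussPDF_eq]
  rw [integral_const_mul, integral_gaussian]
  rw [show Real.pi / (1/2) = 2 * Real.pi by ring]
  exact inv_mul_cancel₀ (ne_of_gt sqrt_two_pi_pos)

lemma integrable_sq_gaussPDF : Integrable (fun x => x ^ 2 * gaussPDF x) := by
  have h := (integrable_rpow_mul_exp_neg_mul_sq (by norm_num : (0:ℝ) < 1/2)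
    (s := 2) (by norm_num)).const_mul (Real.sqrt (2 * Real.pi))⁻¹
  refine h.congr (Filter.Eventually.of_forall fun x => ?_)
  show (Real.sqrt (2 * Real.pi))⁻¹ * (x ^ (2:ℝ) * Real.exp (-(1/2) * x ^ 2)) =
    x ^ 2 * gaussPDF x
  rw [gaussPDF_eq, show ((2:ℝ)) = ((2:ℕ):ℝ) by norm_num, Real.rpow_natCast]
  push_cast
  ring

lemma tendsto_mul_gaussPDF_atTop :
    Filter.Tendsto (fun x => -x * gaussPDF x) Filter.atTop (nhds 0) := by
  have h1 : Filter.Tendsto (fun x : ℝ => x * Real.exp (-(1/2:ℝ) * x ^ 2))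
      Filter.atTop (nhds 0) := by
    have h := rpow_mul_exp_neg_mul_sq_isLittleO_exp_neg (by norm_num : (0:ℝ) < 1/2) 1
    have hhalf : Filter.Tendsto (fun x : ℝ => Real.exp (-(1/2) * x))
        Filter.atTop (nhds 0) := by
      apply Real.tendsto_exp_atBot.comp
      have h1 : Filter.Tendsto (fun x : ℝ => (1/2 : ℝ) * x) Filter.atTop Filter.atTop :=
        Filter.Tendsto.const_mul_atTop (by norm_num) Filter.tendsto_id
      have h2 := Filter.tendsto_neg_atTop_atBot.comp h1
      refine h2.congr fun x => ?_
      simp [Function.comp]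
    have h2 := h.tendsto_zero_of_tendsto hhalf
    refine h2.congr' ?_
    filter_upwards [Filter.eventually_ge_atTop (0:ℝ)] with x hx
    rw [Real.rpow_one]
  have := (h1.const_mul (-(Real.sqrt (2 * Real.pi))⁻¹))
  rw [mul_zero] at this
  refine this.congr fun x => ?_
  rw [gaussPDF_eq]; ring

lemma tendsto_mul_gaussPDF_atBot :
    Filter.Tendsto (fun x => -x * gaussPDF x) Filter.atBot (nhds 0) := by
  have h := (tendsto_mul_gaussPDF_atTop.comp Filter.tendsto_neg_atBot_atTop).neg
  rw [neg_zero] at h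
  refine h.congr fun x => ?_
  simp only [Function.comp_apply]
  rw [gaussPDF_even]; ring

lemma hasDerivAt_neg_mul_gaussPDF (x : ℝ) :
    HasDerivAt (fun x => -x * gaussPDF x) ((x ^ 2 - 1) * gaussPDF x) x := by
  have hu : HasDerivAt (fun x : ℝ => -x ^ 2 / 2) (-x) x := by
    have h := ((hasDerivAt_pow 2 x).div_const 2).neg
    have e : (fun y : ℝ => -(y ^ 2 / 2)) = fun y : ℝ => -y ^ 2 / 2 :=
      funext fun y => by ring
    change HasDerivAt (fun y : ℝ => -(y ^ 2 / 2)) _ x at h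
    rw [e] at h
    exact h.congr_deriv (by push_cast; ring)
  have hexp := hu.exp
  have hg : HasDerivAt gaussPDF ((Real.sqrt (2 * Real.pi))⁻¹ *
      (Real.exp (-x ^ 2 / 2) * -x)) x := hexp.const_mul _
  have hid : HasDerivAt (fun x : ℝ => -x) (-1) x := (hasDerivAt_id x).neg
  have := hid.mul hg
  refine this.congr_deriv ?_
  unfold gaussPDF; ring

lemma integral_sq_gaussPDF : ∫ x, x ^ 2 * gaussPDF x = 1 := by
  have hint : Integrable (fun x : ℝ => (x ^ 2 - 1) * gaussPDF x) := by
    refine (integrable_sq_gaussPDF.sub integrable_gaussPDF).congr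
      (Filter.Eventually.of_forall fun x => ?_)
    simp only [Pi.sub_apply]
    ring
  have h0 : ∫ x, (x ^ 2 - 1) * gaussPDF x = 0 - 0 :=
    integral_of_hasDerivAt_of_tendsto hasDerivAt_neg_mul_gaussPDF hint
      tendsto_mul_gaussPDF_atBot tendsto_mul_gaussPDF_atTop
  have e : (fun x : ℝ => x ^ 2 * gaussPDF x) =
      fun x => (x ^ 2 - 1) * gaussPDF x + gaussPDF x := funext fun x => by ring
  rw [e, integral_add hint integrable_gaussPDF, h0, integral_gaussPDF]
  ring

noncomputable def expW (lam v : ℝ) : ℝ :=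
  max v 0 ^ 2 * Real.exp (-(lam * max v 0))

lemma expW_nonneg (lam v : ℝ) : 0 ≤ expW lam v := by unfold expW; positivity

lemma expW_eq_indicator (lam : ℝ) : expW lam =
    Set.indicator (Set.Ioi (0:ℝ)) (fun v => v ^ 2 * Real.exp (-(lam * v))) := by
  funext v
  rcases le_or_gt v 0 with h | h
  · rw [Set.indicator_of_notMem (by simpa using h)]
    unfold expW
    rw [max_eq_right h]
    simp
  · rw [Set.indicator_of_mem (by simpa using h)]
    unfold expW
    rw [max_eq_left h.le]

lemma integrableOn_sq_exp {lam : ℝ} (hlam : 0 < lam) :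
    IntegrableOn (fun v : ℝ => v ^ 2 * Real.exp (-(lam * v))) (Set.Ioi 0) := by
  have h := integrableOn_rpow_mul_exp_neg_mul_rpow (s := 2) (p := 1)
    (by norm_num) (by norm_num) hlam
  refine h.congr_fun (fun x hx => ?_) measurableSet_Ioi
  have hx0 : (0:ℝ) < x := hx
  beta_reduce
  rw [Real.rpow_one, show ((2:ℝ)) = ((2:ℕ):ℝ) by norm_num, Real.rpow_natCast]
  ring_nf

lemma integrable_expW {lam : ℝ} (hlam : 0 < lam) : Integrable (expW lam) := by
  rw [expW_eq_indicator]
  rw [integrable_indicator_iff measurableSet_Ioi]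
  exact integrableOn_sq_exp hlam

lemma integral_expW {lam : ℝ} (hlam : 0 < lam) : ∫ v, expW lam v = 2 / lam ^ 3 := by
  rw [expW_eq_indicator, integral_indicator measurableSet_Ioi]
  have h := integral_rpow_mul_exp_neg_mul_Ioi (a := 3) (r := lam) (by norm_num) hlam
  have e : ∫ v in Set.Ioi (0:ℝ), v ^ 2 * Real.exp (-(lam * v)) =
      ∫ t in Set.Ioi (0:ℝ), t ^ ((3:ℝ) - 1) * Real.exp (-(lam * t)) := by
    refine setIntegral_congr_fun measurableSet_Ioi fun t ht => ?_
    rw [show (3:ℝ) - 1 = ((2:ℕ):ℝ) by norm_num, Real.rpow_natCast]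
  have hG : Real.Gamma 3 = 2 := by
    rw [show (3:ℝ) = 2 + 1 by norm_num, Real.Gamma_add_one (by norm_num),
      Real.Gamma_two]
    norm_num
  have hp : (1 / lam) ^ (3:ℝ) = 1 / lam ^ 3 := by
    rw [show (3:ℝ) = ((3:ℕ):ℝ) by norm_num, Real.rpow_natCast]
    ring
  rw [e, h, hG, hp]
  ring
lemma softThresh_eq {lam : ℝ} (hlam : 0 < lam) (x : ℝ) :
    softThresh lam x = x - max (min x lam) (-lam) := by
  unfold softThresh
  rcases lt_trichotomy x 0 with hx | hx | hx
  · rw [Real.sign_of_neg hx, abs_of_neg hx, min_eq_left (by linarith)]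
    rcases le_total (-lam) x with h | h
    · rw [max_eq_right (a := -x - lam) (by linarith), max_eq_left h]; ring
    · rw [max_eq_left (a := -x - lam) (by linarith), max_eq_right h]; ring
  · subst hx
    rw [Real.sign_zero, abs_zero, zero_mul, min_eq_left hlam.le,
      max_eq_left (by linarith)]; ring
  · rw [Real.sign_of_pos hx, abs_of_pos hx]
    rcases le_total x lam with h | h
    · rw [min_eq_left h, max_eq_right (a := x - lam) (by linarith),
        max_eq_left (by linarith)]; ring
    · rw [min_eq_right h, max_eq_left (a := x - lam) (by linarith),
        max_eq_left (by linarith)]; ring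

lemma softThresh_neg (lam x : ℝ) : softThresh lam (-x) = - softThresh lam x := by
  unfold softThresh; rw [Real.sign_neg, abs_neg]; ring

lemma clamp_bounds {lam : ℝ} (hlam : 0 < lam) (x : ℝ) :
    -lam ≤ max (min x lam) (-lam) ∧ max (min x lam) (-lam) ≤ lam :=
  ⟨le_max_right _ _, max_le (min_le_right _ _) (by linarith)⟩

lemma key2 {lam : ℝ} (hlam : 0 < lam) (θ z : ℝ) :
    (softThresh lam (θ + z) - θ) ^ 2 + (softThresh lam (θ - z) - θ) ^ 2 ≤
      2 * z ^ 2 + 2 * lam ^ 2 := by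
  rw [softThresh_eq hlam, softThresh_eq hlam]
  obtain ⟨h1a, h1b⟩ := clamp_bounds hlam (θ + z)
  obtain ⟨h2a, h2b⟩ := clamp_bounds hlam (θ - z)
  set c1 := max (min (θ + z) lam) (-lam)
  set c2 := max (min (θ - z) lam) (-lam)
  rcases le_total 0 z with hz | hz
  · have hc : c2 ≤ c1 := max_le_max (min_le_min (by linarith) le_rfl) le_rfl
    nlinarith [mul_nonneg hz (sub_nonneg.mpr hc)]
  · have hc : c1 ≤ c2 := max_le_max (min_le_min (by linarith) le_rfl) le_rfl
    nlinarith [mul_nonneg (neg_nonneg.mpr hz) (sub_nonneg.mpr hc)]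

lemma key1_aux {lam : ℝ} (hlam : 0 < lam) (θ z : ℝ) (hz : 0 ≤ z) :
    (softThresh lam (θ + z) - θ) ^ 2 + (softThresh lam (θ - z) - θ) ^ 2 ≤
      2 * θ ^ 2 + 2 * softThresh lam z ^ 2 := by
  rw [softThresh_eq hlam, softThresh_eq hlam, softThresh_eq hlam]
  obtain ⟨h1a, h1b⟩ := clamp_bounds hlam (θ + z)
  obtain ⟨h2a, h2b⟩ := clamp_bounds hlam (θ - z)
  set c1 := max (min (θ + z) lam) (-lam) with hc1
  set c2 := max (min (θ - z) lam) (-lam) with hc2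
  rcases le_total z lam with h | h
  · -- c3 = z ; use Lipschitz bounds
    rw [min_eq_left h, max_eq_left (by linarith)]
    have l1 : (c1 - z) ^ 2 ≤ θ ^ 2 := by
      rcases le_total (θ + z) lam with ha | ha
      · rw [hc1, min_eq_left ha]
        rcases le_total (θ + z) (-lam) with hb | hb
        · rw [max_eq_right hb]; nlinarith
        · rw [max_eq_left hb]; nlinarith
      · rw [hc1, min_eq_right ha, max_eq_left (by linarith)]; nlinarith
    have l2 : (c2 + z) ^ 2 ≤ θ ^ 2 := by
      rcases le_total (θ - z) lam with ha | ha
      · rw [hc2, min_eq_left ha]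
        rcases le_total (θ - z) (-lam) with hb | hb
        · rw [max_eq_right hb]; nlinarith
        · rw [max_eq_left hb]; nlinarith
      · rw [hc2, min_eq_right ha, max_eq_left (by linarith)]; nlinarith
    nlinarith
  · -- z ≥ lam : c3 = lam
    rw [min_eq_right h, max_eq_left (by linarith)]
    rcases le_total 0 θ with hθ | hθ
    · have hcc1 : c1 = lam := by
        rw [hc1, min_eq_right (by linarith), max_eq_left (by linarith)]
      rcases le_total (θ - z) (-lam) with hb | hb
      · have hcc2 : c2 = -lam := by
          rw [hc2, min_eq_left (by linarith), max_eq_right hb]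
        rw [hcc1, hcc2]; nlinarith
      · have hcc2 : c2 ≤ θ - z := by
          rw [hc2]; exact max_le (min_le_left _ _) (by linarith)
        have hge : z + c2 ≥ z - lam := by linarith
        rw [hcc1]; nlinarith
    · have hcc2 : c2 = -lam := by
        rw [hc2, min_eq_left (by linarith), max_eq_right (by linarith)]
      rcases le_total lam (θ + z) with hb | hb
      · have hcc1 : c1 = lam := by
          rw [hc1, min_eq_right hb, max_eq_left (by linarith)]
        rw [hcc1, hcc2]; nlinarith
      · have hcc1 : θ + z ≤ c1 := by
          rw [hc1, min_eq_left hb]; exact le_max_left _ _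
        rw [hcc2]; nlinarith

lemma key1 {lam : ℝ} (hlam : 0 < lam) (θ z : ℝ) :
    (softThresh lam (θ + z) - θ) ^ 2 + (softThresh lam (θ - z) - θ) ^ 2 ≤
      2 * θ ^ 2 + 2 * softThresh lam z ^ 2 := by
  rcases le_total 0 z with hz | hz
  · exact key1_aux hlam θ z hz
  · have h := key1_aux hlam θ (-z) (by linarith)
    rw [show θ + -z = θ - z by ring, show θ - -z = θ + z by ring, softThresh_neg] at h
    nlinarith [h]

lemma gauss_tail_bound {lam : ℝ} (hlam : 0 < lam) {z : ℝ} (hz : lam ≤ z) :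
    gaussPDF z ≤ gaussPDF lam * Real.exp (-(lam * (z - lam))) := by
  unfold gaussPDF
  rw [mul_assoc, ← Real.exp_add]
  refine mul_le_mul_of_nonneg_left (Real.exp_le_exp.mpr ?_) (by positivity)
  nlinarith [sq_nonneg (z - lam)]

lemma pointwise_tail {lam : ℝ} (hlam : 0 < lam) (z : ℝ) :
    softThresh lam z ^ 2 * gaussPDF z ≤
      gaussPDF lam * (expW lam (z - lam) + expW lam (-z - lam)) := by
  rcases le_total z lam with h1 | h1
  · rcases le_total (-lam) z with h2 | h2
    · have hs : softThresh lam z = 0 := by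
        rw [softThresh_eq hlam, min_eq_left h1, max_eq_left h2]; ring
      rw [hs]
      have := expW_nonneg lam (z - lam)
      have := expW_nonneg lam (-z - lam)
      have := gaussPDF_nonneg lam
      nlinarith
    · -- z ≤ -lam
      have hs : softThresh lam z = z + lam := by
        rw [softThresh_eq hlam, min_eq_left (by linarith), max_eq_right (by linarith)]
        ring
      have hW2 : expW lam (-z - lam) = (z + lam) ^ 2 * Real.exp (-(lam * (-z - lam))) := by
        unfold expW
        rw [max_eq_left (by linarith)]
        ring_nf
      have hg : gaussPDF z ≤ gaussPDF lam * Real.exp (-(lam * (-z - lam))) := by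
        have := gauss_tail_bound hlam (z := -z) (by linarith)
        rwa [gaussPDF_even, show -z - lam = (-z) - lam by ring] at this
      rw [hs, hW2]
      have h1' := expW_nonneg lam (z - lam)
      have h2' := gaussPDF_nonneg lam
      nlinarith [sq_nonneg (z + lam), Real.exp_pos (-(lam * (-z - lam)))]
  · -- lam ≤ z
    have hs : softThresh lam z = z - lam := by
      rw [softThresh_eq hlam, min_eq_right h1, max_eq_left (by linarith)]
    have hW1 : expW lam (z - lam) = (z - lam) ^ 2 * Real.exp (-(lam * (z - lam))) := by
      unfold expW
      rw [max_eq_left (by linarith)]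
    have hg := gauss_tail_bound hlam h1
    rw [hs, hW1]
    have h1' := expW_nonneg lam (-z - lam)
    have h2' := gaussPDF_nonneg lam
    nlinarith [sq_nonneg (z - lam), Real.exp_pos (-(lam * (z - lam)))]

lemma continuous_softThresh {lam : ℝ} (hlam : 0 < lam) :
    Continuous (softThresh lam) := by
  have e : softThresh lam = fun x => x - max (min x lam) (-lam) :=
    funext (softThresh_eq hlam)
  rw [e]
  fun_prop

theorem stmt_7 (lam θ : ℝ) (hlam : 0 < lam) :
    ∫ x, (softThresh lam x - θ) ^ 2 * gaussPDF (x - θ) ≤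
      min (θ ^ 2 + (4 / lam ^ 3) * gaussPDF lam) (lam ^ 2 + 1) := by
  set f : ℝ → ℝ := fun x => (softThresh lam x - θ) ^ 2 with hf
  have hcontf : Continuous f := ((continuous_softThresh hlam).sub continuous_const).pow 2
  have hfnn : ∀ x, 0 ≤ f x := fun x => sq_nonneg _
  -- change of variables
  have hR1 : ∫ x, f x * gaussPDF (x - θ) = ∫ z, f (θ + z) * gaussPDF z := by
    rw [← integral_add_right_eq_self (μ := volume) (fun x => f x * gaussPDF (x - θ)) θ]
    congr 1
    funext z
    rw [add_sub_cancel_right, add_comm]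
  have hR2 : ∫ z, f (θ + z) * gaussPDF z = ∫ z, f (θ - z) * gaussPDF z := by
    rw [← integral_neg_eq_self (μ := volume) (fun z => f (θ + z) * gaussPDF z)]
    congr 1
    funext z
    rw [gaussPDF_even, show θ + -z = θ - z by ring]
  -- generic bound
  have main : ∀ G : ℝ → ℝ, Integrable (fun z => G z * gaussPDF z) →
      (∀ z, f (θ + z) + f (θ - z) ≤ G z) →
      ∫ x, f x * gaussPDF (x - θ) ≤ (1/2) * ∫ z, G z * gaussPDF z := by
    intro G hGint hpt
    have hmeasA : AEStronglyMeasurable (fun z => f (θ + z) * gaussPDF z) volume :=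
      ((hcontf.comp (continuous_const.add continuous_id)).mul continuous_gaussPDF).aestronglyMeasurable
    have hmeasB : AEStronglyMeasurable (fun z => f (θ - z) * gaussPDF z) volume :=
      ((hcontf.comp (continuous_const.sub continuous_id)).mul continuous_gaussPDF).aestronglyMeasurable
    have hboundA : ∀ z, ‖f (θ + z) * gaussPDF z‖ ≤ G z * gaussPDF z := by
      intro z
      rw [Real.norm_eq_abs, abs_of_nonneg (mul_nonneg (hfnn _) (gaussPDF_nonneg z))]
      have := hpt z
      have := hfnn (θ - z)
      nlinarith [gaussPDF_nonneg z, hfnn (θ + z)]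
    have hboundB : ∀ z, ‖f (θ - z) * gaussPDF z‖ ≤ G z * gaussPDF z := by
      intro z
      rw [Real.norm_eq_abs, abs_of_nonneg (mul_nonneg (hfnn _) (gaussPDF_nonneg z))]
      have := hpt z
      nlinarith [gaussPDF_nonneg z, hfnn (θ + z), hfnn (θ - z)]
    have hA : Integrable (fun z => f (θ + z) * gaussPDF z) :=
      hGint.mono' hmeasA (Filter.Eventually.of_forall hboundA)
    have hB : Integrable (fun z => f (θ - z) * gaussPDF z) :=
      hGint.mono' hmeasB (Filter.Eventually.of_forall hboundB)
    have hsum : ∫ z, (f (θ + z) * gaussPDF z + f (θ - z) * gaussPDF z) ≤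
        ∫ z, G z * gaussPDF z := by
      refine integral_mono (hA.add hB) hGint fun z => ?_
      have := hpt z
      nlinarith [gaussPDF_nonneg z]
    rw [integral_add hA hB] at hsum
    rw [hR1]
    linarith [hR2 ▸ hsum, hR2]
  refine le_min ?_ ?_
  · -- first bound
    have hs2int : Integrable (fun z => softThresh lam z ^ 2 * gaussPDF z) := by
      refine integrable_sq_gaussPDF.mono'
        (((continuous_softThresh hlam).pow 2).mul continuous_gaussPDF).aestronglyMeasurable
        (Filter.Eventually.of_forall fun z => ?_)
      rw [Real.norm_eq_abs, abs_of_nonneg (mul_nonneg (sq_nonneg _) (gaussPDF_nonneg z))]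
      have hle : |softThresh lam z| ≤ |z| := by
        rw [softThresh_eq hlam]
        rcases le_total z lam with h1 | h1
        · rcases le_total (-lam) z with h2 | h2
          · rw [min_eq_left h1, max_eq_left h2]; simp
          · rw [min_eq_left (by linarith), max_eq_right (by linarith)]
            rw [abs_of_nonpos (by linarith), abs_of_nonpos (by linarith)]
            linarith
        · rw [min_eq_right h1, max_eq_left (by linarith)]
          rw [abs_of_nonneg (by linarith), abs_of_nonneg (by linarith)]
          linarith
      have h2 : softThresh lam z ^ 2 ≤ z ^ 2 := by
        rw [← sq_abs (softThresh lam z), ← sq_abs z]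
        exact pow_le_pow_left₀ (abs_nonneg _) hle 2
      exact mul_le_mul_of_nonneg_right h2 (gaussPDF_nonneg z)
    have hG1int : Integrable (fun z => (2 * θ ^ 2 + 2 * softThresh lam z ^ 2) * gaussPDF z) := by
      have h := (integrable_gaussPDF.const_mul (2 * θ ^ 2)).add (hs2int.const_mul 2)
      refine h.congr (Filter.Eventually.of_forall fun z => ?_)
      simp only [Pi.add_apply]
      ring
    have hbound := main _ hG1int (fun z => key1 hlam θ z)
    -- compute / bound the integral
    have hsplit : ∫ z, (2 * θ ^ 2 + 2 * softThresh lam z ^ 2) * gaussPDF z =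
        2 * θ ^ 2 * (∫ z, gaussPDF z) + 2 * ∫ z, softThresh lam z ^ 2 * gaussPDF z := by
      rw [← integral_const_mul, ← integral_const_mul,
        ← integral_add (integrable_gaussPDF.const_mul _) (hs2int.const_mul 2)]
      congr 1
      funext z
      ring
    -- tail bound for J
    have hWshift : Integrable (fun z => expW lam (z - lam)) := by
      have h := (integrable_expW hlam).comp_sub_right lam
      exact h
    have hWneg : Integrable (fun z => expW lam (-z - lam)) := by
      simpa using hWshift.comp_neg
    have hDint : Integrable (fun z => gaussPDF lam * (expW lam (z - lam) + expW lam (-z - lam))) :=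
      (hWshift.add hWneg).const_mul _
    have hJ : ∫ z, softThresh lam z ^ 2 * gaussPDF z ≤
        ∫ z, gaussPDF lam * (expW lam (z - lam) + expW lam (-z - lam)) :=
      integral_mono hs2int hDint (pointwise_tail hlam)
    have hDval : ∫ z, gaussPDF lam * (expW lam (z - lam) + expW lam (-z - lam)) =
        gaussPDF lam * (4 / lam ^ 3) := by
      rw [integral_const_mul, integral_add hWshift hWneg]
      have h1 : ∫ z, expW lam (z - lam) = 2 / lam ^ 3 := by
        rw [integral_sub_right_eq_self (μ := volume) (expW lam) lam]
        exact integral_expW hlam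
      have h2 : ∫ z, expW lam (-z - lam) = 2 / lam ^ 3 := by
        rw [← integral_neg_eq_self (μ := volume) (fun z => expW lam (z - lam))] at h1
        rw [← h1]
      rw [h1, h2]
      ring
    rw [hsplit, integral_gaussPDF] at hbound
    calc ∫ x, f x * gaussPDF (x - θ) ≤ _ := hbound
      _ ≤ θ ^ 2 + (4 / lam ^ 3) * gaussPDF lam := by
          rw [hDval] at hJ
          linarith
  · -- second bound
    have hG2int : Integrable (fun z => (2 * z ^ 2 + 2 * lam ^ 2) * gaussPDF z) := by
      have h := (integrable_sq_gaussPDF.const_mul 2).add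
        (integrable_gaussPDF.const_mul (2 * lam ^ 2))
      refine h.congr (Filter.Eventually.of_forall fun z => ?_)
      simp only [Pi.add_apply]
      ring
    have hbound := main _ hG2int (fun z => key2 hlam θ z)
    have hval : ∫ z, (2 * z ^ 2 + 2 * lam ^ 2) * gaussPDF z = 2 + 2 * lam ^ 2 := by
      have e : (fun z : ℝ => (2 * z ^ 2 + 2 * lam ^ 2) * gaussPDF z) =
          fun z => 2 * (z ^ 2 * gaussPDF z) + 2 * lam ^ 2 * gaussPDF z :=
        funext fun z => by ring
      rw [e, integral_add (integrable_sq_gaussPDF.const_mul 2)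
        (integrable_gaussPDF.const_mul _), integral_const_mul, integral_const_mul,
        integral_sq_gaussPDF, integral_gaussPDF]
      ring
    rw [hval] at hbound
    linarith
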